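/- Let N be a connected Lie subgroup of GL(n,ℝ) whose Lie algebra consists of nilpotent matrices. Then every element of N is a unipotent matrix, and the exponential map from the Lie algebra of N to N is surjective. -/

import Mathlib

attribute [local instance 100] LieRing.ofAssociativeRing

/-!
The group `N` is generated by `exp 𝔲`, so both claims follow once `exp 𝔲` is known to be closed
under products: it is closed under inverses because `(exp X)⁻¹ = exp (-X)`, and `exp X - 1` is
`X` times a polynomial in `X`, hence `(exp X - 1) ^ n = 0`.

Closure under products is the Baker–Campbell–Hausdorff theorem for nilpotent Lie algebras. By
Engel's theorem, associative products of sufficiently many elements of `𝔲` vanish. For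
`x, y ∈ 𝔲` the product `g(t) = exp (t x) * exp (t y)` is a polynomial in `t` with `g(0) = 1`, so
`Z(t) = log g(t)` is a polynomial with `exp Z = g` and `Z(0) = 0`. The derivative of the
exponential gives `∑ⱼ (-ad Z)ʲ Z' / (j + 1)! = g⁻¹ g' = exp (-t y) x exp (t y) + y`, a polynomial
with coefficients in `𝔲`. Since `ad Z` raises the degree in `t`, this recursively puts every
coefficient of `Z` into `𝔲`, and `exp x * exp y = exp (Z(1))`.
-/

open Polynomial Finset
open IsNilpotent (exp exp_eq_sum)
open LieAlgebra (ad)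

section NilpotentExp

variable {A : Type*} [Ring A] [Algebra ℚ A]

theorem exp_mulLeft_apply {a : A} (ha : IsNilpotent a) (b : A) :
    exp (LinearMap.mulLeft ℚ a) b = exp a * b := by
  obtain ⟨k, hk⟩ := ha
  have hL : LinearMap.mulLeft ℚ a ^ k = 0 := by
    rw [LinearMap.pow_mulLeft, hk, LinearMap.mulLeft_zero_eq_zero]
  simp [exp_eq_sum hL, exp_eq_sum hk, LinearMap.pow_mulLeft, Finset.sum_mul]

theorem exp_mulRight_apply {a : A} (ha : IsNilpotent a) (b : A) :
    exp (LinearMap.mulRight ℚ a) b = b * exp a := by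
  obtain ⟨k, hk⟩ := ha
  have hR : LinearMap.mulRight ℚ a ^ k = 0 := by
    rw [LinearMap.pow_mulRight, hk, LinearMap.mulRight_zero_eq_zero]
  simp [exp_eq_sum hR, exp_eq_sum hk, LinearMap.pow_mulRight, Finset.mul_sum]

theorem exp_mul_mul_exp_neg {a : A} (ha : IsNilpotent a) (b : A) :
    exp a * b * exp (-a) = exp (ad ℚ A a) b := by
  have had : ad ℚ A a = LinearMap.mulLeft ℚ a + LinearMap.mulRight ℚ (-a) := by
    ext c; simp [Ring.lie_def, sub_eq_add_neg]
  rw [had, IsNilpotent.exp_add_of_commute (LinearMap.commute_mulLeft_right _ _)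
    ((LinearMap.isNilpotent_mulLeft_iff ℚ a).2 ha)
    ((LinearMap.isNilpotent_mulRight_iff ℚ _).2 ha.neg),
    Module.End.mul_apply, exp_mulRight_apply ha.neg, exp_mulLeft_apply ha, mul_assoc]

theorem commute_exp_right {a b : A} (h : Commute a b) : Commute a (exp b) :=
  Commute.sum_right _ _ _ fun i _ => (h.pow_right i).smul_right _

theorem exp_sub_one_pow_eq_zero {a : A} {n : ℕ} (ha : a ^ n = 0) : (exp a - 1) ^ n = 0 := by
  have hq : Commute a (∑ i ∈ range n, ((i + 1).factorial : ℚ)⁻¹ • a ^ i) :=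
    Commute.sum_right _ _ _ fun i _ => ((Commute.refl a).pow_right i).smul_right _
  rw [exp_eq_sum (pow_eq_zero_of_le n.le_succ ha), Finset.sum_range_succ']
  simp only [Nat.factorial_zero, Nat.cast_one, inv_one, pow_zero, one_smul, add_sub_cancel_right]
  rw [show ∑ i ∈ range n, ((i + 1).factorial : ℚ)⁻¹ • a ^ (i + 1) =
    a * ∑ i ∈ range n, ((i + 1).factorial : ℚ)⁻¹ • a ^ i by simp [Finset.mul_sum, pow_succ'],
    hq.mul_pow, ha, zero_mul]

end NilpotentExp

section PolynomialCurves

variable {S : Type*} [Ring S]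

def evalOne (R : Type*) [Ring R] : R[X] →+* R :=
  eval₂RingHom' (RingHom.id R) 1 fun a => Commute.one_right a

@[simp] theorem evalOne_apply (p : S[X]) : evalOne S p = p.eval 1 := rfl

theorem C_mul_X_pow (w : S) (k : ℕ) : (C w * X) ^ k = C (w ^ k) * X ^ k := by
  rw [((commute_X (C w)).symm).mul_pow, map_pow]

theorem commute_C_mul_X_C (w : S) : Commute (C w * X) (C w) :=
  (Commute.refl _).mul_left (commute_X _)

theorem neg_C_neg_mul_X (w : S) : -(C (-w) * X) = C w * X :=
  neg_eq_of_add_eq_zero_left (by rw [← add_mul, ← map_add, add_neg_cancel, map_zero, zero_mul])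

theorem coeff_sum_range_C_mul_X_pow {f : ℕ → S} {k : ℕ} (hf : ∀ m ≥ k, f m = 0) (m : ℕ) :
    (∑ i ∈ range k, C (f i) * X ^ i).coeff m = f m := by
  rw [finsetSum_coeff]
  simp only [coeff_C_mul_X_pow, Finset.sum_ite_eq, mem_range]
  split_ifs with h
  · rfl
  · exact (hf m (not_lt.1 h)).symm

theorem derivative_pow_succ_of_commute {P : S[X]} (h : Commute P (derivative P)) (n : ℕ) :
    derivative (P ^ (n + 1)) = (n + 1) • (P ^ n * derivative P) := by
  induction n with
  | zero => simp
  | succ n ih =>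
    rw [pow_succ, derivative_mul, ih, smul_mul_assoc, mul_assoc, ← h.eq, ← mul_assoc, ← pow_succ,
      ← succ_nsmul]

theorem isNilpotent_C_mul_X {w : S} (hw : IsNilpotent w) : IsNilpotent (C w * X) := by
  obtain ⟨k, hk⟩ := hw
  exact ⟨k, by rw [C_mul_X_pow, hk, map_zero, zero_mul]⟩

theorem coeff_lie (P Q : S[X]) (m : ℕ) :
    ⁅P, Q⁆.coeff m = ∑ x ∈ antidiagonal m, ⁅P.coeff x.1, Q.coeff x.2⁆ := by
  rw [Ring.lie_def, coeff_sub, coeff_mul, coeff_mul,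
    ← Finset.Nat.sum_antidiagonal_swap (f := fun x => Q.coeff x.1 * P.coeff x.2),
    ← Finset.sum_sub_distrib]
  rfl

variable [Algebra ℚ S]

theorem ad_C_mul_X_pow_apply_C (w b : S) (j : ℕ) :
    (ad ℚ S[X] (C w * X) ^ j) (C b) = C ((ad ℚ S w ^ j) b) * X ^ j := by
  induction j with
  | zero => simp
  | succ j ih =>
    rw [pow_succ', Module.End.mul_apply, ih, pow_succ', Module.End.mul_apply, LieAlgebra.ad_apply,
      LieAlgebra.ad_apply, Ring.lie_def, Ring.lie_def, map_sub, map_mul, map_mul, sub_mul]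
    congr 1
    · rw [mul_assoc, ← mul_assoc X, X_mul_C, mul_assoc, ← mul_assoc, pow_succ']
    · rw [mul_assoc, ← mul_assoc (X ^ j), X_pow_mul_C, mul_assoc, ← mul_assoc, pow_succ]

theorem exp_C_mul_X_eq_sum {w : S} {k : ℕ} (hk : w ^ k = 0) :
    exp (C w * X) = ∑ i ∈ range k, C ((i.factorial : ℚ)⁻¹ • w ^ i) * X ^ i := by
  rw [exp_eq_sum (by rw [C_mul_X_pow, hk, map_zero, zero_mul])]
  refine Finset.sum_congr rfl fun i _ => ?_
  rw [C_mul_X_pow, ← smul_C, smul_mul_assoc]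

theorem coeff_exp_C_mul_X {w : S} {k : ℕ} (hk : w ^ k = 0) (m : ℕ) :
    (exp (C w * X)).coeff m = (m.factorial : ℚ)⁻¹ • w ^ m := by
  rw [exp_C_mul_X_eq_sum hk, coeff_sum_range_C_mul_X_pow fun m hm => by
    rw [pow_eq_zero_of_le hm hk, smul_zero]]

theorem exp_C_neg_mul_X_mul_C_mul_exp {w : S} (hw : IsNilpotent w) {K : ℕ}
    (hK : ad ℚ S (-w) ^ K = 0) (b : S) :
    exp (C (-w) * X) * C b * exp (C w * X) =
      ∑ j ∈ range K, C ((j.factorial : ℚ)⁻¹ • (ad ℚ S (-w) ^ j) b) * X ^ j := by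
  have ha := isNilpotent_C_mul_X hw.neg
  obtain ⟨K', hK'⟩ := LieAlgebra.ad_nilpotent_of_nilpotent (R := ℚ) ha
  have hv : ∀ j ≥ K, (j.factorial : ℚ)⁻¹ • (C ((ad ℚ S (-w) ^ j) b) * X ^ j) = 0 := fun j hj => by
    rw [pow_eq_zero_of_le hj hK, LinearMap.zero_apply, map_zero, zero_mul, smul_zero]
  rw [← neg_C_neg_mul_X w, exp_mul_mul_exp_neg ha,
    exp_eq_sum (pow_eq_zero_of_le (le_max_right K K') hK')]
  simp only [LinearMap.sum_apply, LinearMap.smul_apply, ad_C_mul_X_pow_apply_C]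
  rw [Finset.eventually_constant_sum hv (le_max_left K K')]
  simp only [← smul_mul_assoc, smul_C]

theorem eq_of_derivative_eq {P Q : S[X]} (h : derivative P = derivative Q)
    (h0 : P.coeff 0 = Q.coeff 0) : P = Q := by
  ext (_ | m)
  · exact h0
  · have hm := congrArg (coeff · m) h
    simp only [coeff_derivative] at hm
    have hunit : IsUnit ((m : S) + 1) := by
      simpa using (isUnit_iff_ne_zero.2 (Nat.cast_add_one_ne_zero m : (m : ℚ) + 1 ≠ 0)).map
        (algebraMap ℚ S)
    exact hunit.mul_right_cancel hm

theorem smul_factorial_succ_inv_mul_natCast_succ (m : ℕ) (a : S) :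
    ((m + 1).factorial : ℚ)⁻¹ • a * ((m : S) + 1) = (m.factorial : ℚ)⁻¹ • a := by
  rw [← Nat.cast_succ, ← nsmul_eq_mul', ← Nat.cast_smul_eq_nsmul ℚ, smul_smul, Nat.factorial_succ]
  push_cast
  congr 1
  field_simp

theorem derivative_exp_of_commute {P : S[X]} (hP : IsNilpotent P)
    (h : Commute P (derivative P)) : derivative (exp P) = exp P * derivative P := by
  obtain ⟨k, hk⟩ := hP
  rw [exp_eq_sum (pow_eq_zero_of_le k.le_succ hk), map_sum, Finset.sum_range_succ',
    Finset.sum_mul, Finset.sum_range_succ]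
  simp only [map_rat_smul, derivative_pow_succ_of_commute h, pow_zero, derivative_one,
    smul_zero, add_zero, hk, zero_mul, smul_mul_assoc]
  refine Finset.sum_congr rfl fun i _ => ?_
  rw [← Nat.cast_smul_eq_nsmul ℚ, smul_smul, Nat.factorial_succ]
  push_cast
  congr 1
  field_simp

theorem derivative_exp_C_mul_X {w : S} (hw : IsNilpotent w) :
    derivative (exp (C w * X)) = C w * exp (C w * X) := by
  rw [derivative_exp_of_commute (isNilpotent_C_mul_X hw)
    (by rw [derivative_C_mul_X]; exact commute_C_mul_X_C w), derivative_C_mul_X]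
  exact (commute_exp_right (commute_C_mul_X_C w).symm).eq.symm

theorem derivative_sum_C_smul_derivative_pow_mul_X_pow {W : S[X]} {k : ℕ} (hk : W ^ k = 0) :
    derivative (∑ i ∈ range k, C ((i.factorial : ℚ)⁻¹ • derivative (W ^ i)) * X ^ i) =
      C (derivative W) * exp (C W * X) +
        C W * ∑ i ∈ range k, C ((i.factorial : ℚ)⁻¹ • derivative (W ^ i)) * X ^ i := by
  have hcoeff :=
    coeff_sum_range_C_mul_X_pow (f := fun i => (i.factorial : ℚ)⁻¹ • derivative (W ^ i))
      fun m hm => by rw [pow_eq_zero_of_le hm hk, map_zero, smul_zero]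
  ext m : 1
  rw [coeff_derivative, coeff_add, coeff_C_mul, coeff_C_mul, hcoeff, hcoeff, coeff_exp_C_mul_X hk,
    smul_factorial_succ_inv_mul_natCast_succ, pow_succ', derivative_mul, mul_smul_comm,
    mul_smul_comm, smul_add]

theorem exp_neg_mul_derivative_exp {W : S[X]} (hW : IsNilpotent W) {K : ℕ}
    (hK : ad ℚ S[X] (-W) ^ K = 0) :
    exp (-W) * derivative (exp W) =
      ∑ j ∈ range K, ((j + 1).factorial : ℚ)⁻¹ • (ad ℚ S[X] (-W) ^ j) (derivative W) := by
  obtain ⟨k, hk⟩ := id hW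
  -- In a second variable `s`, `E = ∂ₜ exp (s W)` and `G = exp (-s W) * E` has
  -- `∂G/∂s = exp (-s W) * W' * exp (s W)`, a conjugate of `W'`; integrate and put `s = 1`.
  set E : S[X][X] := ∑ i ∈ range k, C ((i.factorial : ℚ)⁻¹ • derivative (W ^ i)) * X ^ i
  set H : S[X][X] := ∑ j ∈ range K,
    C (((j + 1).factorial : ℚ)⁻¹ • (ad ℚ S[X] (-W) ^ j) (derivative W)) * X ^ (j + 1)
  have hG : derivative (exp (C (-W) * X) * E) =
      exp (C (-W) * X) * C (derivative W) * exp (C W * X) := by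
    have hc : Commute (C W) (exp (C (-W) * X)) :=
      commute_exp_right (((Commute.refl W).neg_right.map C).mul_right (commute_X _).symm)
    rw [derivative_mul, derivative_exp_C_mul_X hW.neg,
      derivative_sum_C_smul_derivative_pow_mul_X_pow hk, mul_add, ← mul_assoc _ (C W), ← hc.eq]
    generalize exp (C (-W) * X) = e
    rw [map_neg]
    noncomm_ring
  have hH : derivative H = exp (C (-W) * X) * C (derivative W) * exp (C W * X) := by
    rw [exp_C_neg_mul_X_mul_C_mul_exp hW hK, map_sum]
    refine Finset.sum_congr rfl fun j _ => ?_
    rw [derivative_C_mul_X_pow, Nat.cast_succ, smul_factorial_succ_inv_mul_natCast_succ,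
      Nat.add_sub_cancel]
  have hGH : exp (C (-W) * X) * E = H :=
    eq_of_derivative_eq (hG.trans hH.symm) (by simp [E, H, mul_coeff_zero])
  have hev := congrArg (evalOne S[X]) hGH
  rw [map_mul, IsNilpotent.map_exp (isNilpotent_C_mul_X hW.neg)] at hev
  simp only [E, H, evalOne_apply, eval_finsetSum, eval_C_mul, eval_X, eval_X_pow, one_pow,
    mul_one] at hev
  simpa only [exp_eq_sum hk, map_sum, map_rat_smul] using hev

end PolynomialCurves

section Logarithm

variable {S : Type*} [Ring S] [Algebra ℚ S]

/-- `log (1 + a)`; meaningful for nilpotent `a`. -/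
noncomputable def logOneAdd (a : S) : S :=
  ∑ i ∈ range (nilpotencyClass a), ((-1) ^ i / (i + 1) : ℚ) • a ^ (i + 1)

theorem logOneAdd_eq_sum {a : S} {k : ℕ} (hk : a ^ k = 0) :
    logOneAdd a = ∑ i ∈ range k, ((-1) ^ i / (i + 1) : ℚ) • a ^ (i + 1) := by
  have hv : ∀ m : ℕ, a ^ m = 0 → ∀ i ≥ m, ((-1) ^ i / (i + 1) : ℚ) • a ^ (i + 1) = 0 :=
    fun m hm i hi => by rw [pow_eq_zero_of_le (by omega) hm, smul_zero]
  rw [logOneAdd, ← Finset.eventually_constant_sum (hv _ (pow_nilpotencyClass ⟨k, hk⟩))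
    (le_max_left _ k), Finset.eventually_constant_sum (hv _ hk) (le_max_right _ k)]

theorem map_logOneAdd {T : Type*} [Ring T] [Algebra ℚ T] (f : S →+* T) {a : S}
    (ha : IsNilpotent a) : f (logOneAdd a) = logOneAdd (f a) := by
  obtain ⟨k, hk⟩ := ha
  rw [logOneAdd_eq_sum hk, logOneAdd_eq_sum (by rw [← map_pow, hk, map_zero]), map_sum]
  simp [map_rat_smul]

theorem isNilpotent_logOneAdd {a : S} (ha : IsNilpotent a) : IsNilpotent (logOneAdd a) := by
  obtain ⟨k, hk⟩ := ha
  have hq : Commute a (∑ i ∈ range k, ((-1) ^ i / (i + 1) : ℚ) • a ^ i) :=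
    Commute.sum_right _ _ _ fun i _ => ((Commute.refl a).pow_right i).smul_right _
  refine ⟨k, ?_⟩
  rw [logOneAdd_eq_sum hk, show ∑ i ∈ range k, ((-1) ^ i / (i + 1) : ℚ) • a ^ (i + 1) =
    a * ∑ i ∈ range k, ((-1) ^ i / (i + 1) : ℚ) • a ^ i by simp [Finset.mul_sum, pow_succ'],
    hq.mul_pow, hk, zero_mul]

theorem neg_pow_eq_smul (y : S) (i : ℕ) : (-y) ^ i = ((-1 : ℚ) ^ i) • y ^ i := by
  rw [Algebra.smul_def, map_pow, map_neg, map_one, neg_pow]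

theorem derivative_logOneAdd_C_mul_X {a : S} {k : ℕ} (hk : a ^ k = 0) :
    derivative (logOneAdd (C a * X)) = (∑ i ∈ range k, (-(C a * X)) ^ i) * C a := by
  have hyk : (C a * X) ^ k = 0 := by rw [C_mul_X_pow, hk, map_zero, zero_mul]
  have hyy' : Commute (C a * X) (derivative (C a * X)) := by
    rw [derivative_C_mul_X]
    exact commute_C_mul_X_C a
  rw [logOneAdd_eq_sum hyk, map_sum, Finset.sum_mul]
  refine Finset.sum_congr rfl fun i _ => ?_
  rw [map_rat_smul, derivative_pow_succ_of_commute hyy', derivative_C_mul_X,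
    ← Nat.cast_smul_eq_nsmul ℚ, smul_smul, neg_pow_eq_smul (C a * X) i, smul_mul_assoc]
  push_cast
  congr 1
  field_simp

theorem exp_logOneAdd {a : S} (ha : IsNilpotent a) : exp (logOneAdd a) = 1 + a := by
  obtain ⟨k, hk⟩ := id ha
  -- `P = log (1 + t a)` satisfies `(1 + t a) P' = a`, so `exp (-P) * (1 + t a)` is constant.
  set y : S[X] := C a * X
  have hyk : y ^ k = 0 := by rw [C_mul_X_pow, hk, map_zero, zero_mul]
  have hy : IsNilpotent y := ⟨k, hyk⟩
  set P := logOneAdd y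
  have hP : P = ∑ i ∈ range k, ((-1) ^ i / (i + 1) : ℚ) • y ^ (i + 1) := logOneAdd_eq_sum hyk
  have hyP' : Commute y (derivative P) := by
    rw [derivative_logOneAdd_C_mul_X hk]
    exact (Commute.sum_right _ _ _ fun i _ => ((Commute.refl y).neg_right).pow_right i).mul_right
      (commute_C_mul_X_C a)
  have hPP' : Commute P (derivative P) := by
    nth_rewrite 1 [hP]
    exact Commute.sum_left _ _ _ fun i _ => (hyP'.pow_left _).smul_left _
  have hP'y : (1 + y) * derivative P = C a := by
    rw [derivative_logOneAdd_C_mul_X hk, ← mul_assoc, ← sub_neg_eq_add, mul_neg_geom_sum, neg_pow,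
      hyk, mul_zero, sub_zero, one_mul]
  have hP0 : P.coeff 0 = 0 := by simp [hP, y, C_mul_X_pow]
  have hF : exp (-P) * (1 + y) = 1 := by
    refine eq_of_derivative_eq ?_ ?_
    · rw [derivative_mul, derivative_exp_of_commute (isNilpotent_logOneAdd hy).neg
        (by rw [derivative_neg]; exact hPP'.neg_left.neg_right), derivative_one, derivative_neg,
        derivative_add, derivative_one, zero_add, derivative_C_mul_X, mul_assoc, neg_mul,
        ← ((Commute.one_left _).add_left hyP').eq, hP'y, ← mul_add, neg_add_cancel, mul_zero]
    · rw [mul_coeff_zero, ← constantCoeff_apply, IsNilpotent.map_exp (isNilpotent_logOneAdd hy).neg,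
        map_neg, constantCoeff_apply, hP0, neg_zero, IsNilpotent.exp_zero, one_mul]
      simp [y]
  have h1y : 1 + y = exp P :=
    calc 1 + y = exp P * (exp (-P) * (1 + y)) := by
          rw [← mul_assoc, IsNilpotent.exp_mul_exp_neg_self (isNilpotent_logOneAdd hy), one_mul]
      _ = exp P := by rw [hF, mul_one]
  have hev := congrArg (evalOne S) h1y
  rw [IsNilpotent.map_exp (isNilpotent_logOneAdd hy), map_logOneAdd _ hy] at hev
  simpa [y] using hev.symm

end Logarithm

section BakerCampbellHausdorff

variable {S : Type*} [Ring S] [Algebra ℚ S]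

/-- The Rees algebra of the filtration of `S` by the powers of `U`. -/
def reesSubalgebra (U : Submodule ℚ S) : Subalgebra ℚ S[X] where
  carrier := {P | ∀ m, P.coeff m ∈ U ^ m}
  mul_mem' {P Q} hP hQ m := by
    rw [coeff_mul]
    refine Submodule.sum_mem _ fun x hx => ?_
    rw [← Finset.HasAntidiagonal.mem_antidiagonal.1 hx, pow_add]
    exact Submodule.mul_mem_mul (hP x.1) (hQ x.2)
  add_mem' hP hQ m := by
    rw [coeff_add]
    exact add_mem (hP m) (hQ m)
  algebraMap_mem' r m := by
    rw [Polynomial.algebraMap_apply, coeff_C]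
    split_ifs with h
    · subst h
      exact Submodule.algebraMap_mem r
    · exact zero_mem _

theorem C_mul_X_mem_reesSubalgebra {U : Submodule ℚ S} {x : S} (hx : x ∈ U) :
    C x * X ∈ reesSubalgebra U := fun m => by
  rw [coeff_C_mul_X]
  split_ifs with h
  · subst h
    rwa [pow_one]
  · exact zero_mem _

theorem exp_mem {R : Subalgebra ℚ S} {a : S} (ha : a ∈ R) : exp a ∈ R :=
  Subalgebra.sum_mem _ fun i _ => Subalgebra.smul_mem _ (Subalgebra.pow_mem _ ha i) _

theorem pow_eq_zero_of_mem_of_pow_eq_bot {U : Submodule ℚ S} {d : ℕ} (hd : U ^ d = ⊥) {x : S}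
    (hx : x ∈ U) : x ^ d = 0 := by
  simpa [hd] using Submodule.pow_mem_pow U hx d

theorem pow_eq_zero_of_mem_reesSubalgebra {U : Submodule ℚ S} {d : ℕ} (hd : U ^ d = ⊥)
    {P : S[X]} (hP : P ∈ reesSubalgebra U) (h0 : P.coeff 0 = 0) : P ^ d = 0 := by
  obtain ⟨Q, rfl⟩ := X_dvd_iff.2 h0
  ext m
  rw [(commute_X Q).mul_pow, coeff_X_pow_mul', coeff_zero]
  split_ifs with hm
  · have hUm : U ^ m = ⊥ := by rw [← Nat.sub_add_cancel hm, pow_add, hd, Submodule.mul_bot]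
    have := Subalgebra.pow_mem _ hP d m
    rwa [(commute_X Q).mul_pow, coeff_X_pow_mul', if_pos hm, hUm, Submodule.mem_bot] at this
  · rfl

theorem derivative_exp_C_mul_X_mul_exp {x y : S} (hx : IsNilpotent x) (hy : IsNilpotent y) :
    derivative (exp (C x * X) * exp (C y * X)) = exp (C x * X) * exp (C y * X) *
      (exp (C (-y) * X) * C x * exp (C y * X) + C y) := by
  have hinv : exp (C y * X) * exp (C (-y) * X) = 1 := by
    rw [← neg_C_neg_mul_X y, IsNilpotent.exp_neg_mul_exp_self (isNilpotent_C_mul_X hy.neg)]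
  have hcx := commute_exp_right (commute_C_mul_X_C x).symm
  have hcy := commute_exp_right (commute_C_mul_X_C y).symm
  rw [derivative_mul, derivative_exp_C_mul_X hx, derivative_exp_C_mul_X hy, mul_add,
    mul_assoc (exp (C x * X)), ← mul_assoc (exp (C y * X)), ← mul_assoc (exp (C y * X)), hinv,
    one_mul, hcx.eq, hcy.eq]
  noncomm_ring

theorem constantCoeff_exp_C_mul_X_mul_exp {x y : S} (hx : IsNilpotent x) (hy : IsNilpotent y) :
    constantCoeff (exp (C x * X) * exp (C y * X)) = 1 := by
  rw [map_mul, IsNilpotent.map_exp (isNilpotent_C_mul_X hx),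
    IsNilpotent.map_exp (isNilpotent_C_mul_X hy)]
  simp

theorem isNilpotent_exp_C_mul_X_mul_exp_sub_one {U : Submodule ℚ S} {d : ℕ} (hd : U ^ d = ⊥)
    {x y : S} (hx : x ∈ U) (hy : y ∈ U) : IsNilpotent (exp (C x * X) * exp (C y * X) - 1) := by
  have hg : exp (C x * X) * exp (C y * X) ∈ reesSubalgebra U :=
    mul_mem (exp_mem (C_mul_X_mem_reesSubalgebra hx)) (exp_mem (C_mul_X_mem_reesSubalgebra hy))
  refine ⟨d, pow_eq_zero_of_mem_reesSubalgebra hd (sub_mem hg (one_mem _)) ?_⟩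
  rw [coeff_sub, ← constantCoeff_apply, constantCoeff_exp_C_mul_X_mul_exp
    ⟨d, pow_eq_zero_of_mem_of_pow_eq_bot hd hx⟩ ⟨d, pow_eq_zero_of_mem_of_pow_eq_bot hd hy⟩]
  simp

variable {U : Submodule ℚ S} (hU : ∀ a ∈ U, ∀ b ∈ U, ⁅a, b⁆ ∈ U)
include hU

theorem ad_pow_apply_mem {a b : S} (ha : a ∈ U) (hb : b ∈ U) (j : ℕ) :
    (ad ℚ S a ^ j) b ∈ U := by
  induction j with
  | zero => exact hb
  | succ j ih =>
    rw [pow_succ', Module.End.mul_apply]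
    exact hU a ha _ ih

theorem coeff_exp_C_neg_mul_X_mul_C_mul_exp_mem {x y : S} (hx : x ∈ U) (hy : y ∈ U)
    (hy' : IsNilpotent y) (m : ℕ) : (exp (C (-y) * X) * C x * exp (C y * X)).coeff m ∈ U := by
  obtain ⟨K, hK⟩ := LieAlgebra.ad_nilpotent_of_nilpotent (R := ℚ) hy'.neg
  rw [exp_C_neg_mul_X_mul_C_mul_exp hy' hK, finsetSum_coeff]
  refine Submodule.sum_mem _ fun j _ => ?_
  rw [coeff_C_mul_X_pow]
  split_ifs
  · exact U.smul_mem _ (ad_pow_apply_mem hU (neg_mem hy) hx j)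
  · exact zero_mem _

theorem coeff_lie_mem {Z Y : S[X]} {m : ℕ} (hZ0 : Z.coeff 0 = 0) (hZ : ∀ a ≤ m, Z.coeff a ∈ U)
    (hY : ∀ b < m, Y.coeff b ∈ U) : ∀ b ≤ m, ⁅Z, Y⁆.coeff b ∈ U := by
  intro b hb
  rw [coeff_lie]
  refine Submodule.sum_mem _ fun x hx => ?_
  rw [Finset.HasAntidiagonal.mem_antidiagonal] at hx
  rcases Nat.eq_zero_or_pos x.1 with h | h
  · rw [h, hZ0, zero_lie]
    exact zero_mem _
  · exact hU _ (hZ _ (by omega)) _ (hY _ (by omega))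

theorem coeff_ad_pow_succ_mem {Z Y : S[X]} {m : ℕ} (hZ0 : Z.coeff 0 = 0)
    (hZ : ∀ a ≤ m, Z.coeff a ∈ U) (hY : ∀ b < m, Y.coeff b ∈ U) (j : ℕ) :
    ((ad ℚ S[X] Z ^ (j + 1)) Y).coeff m ∈ U := by
  suffices ∀ b ≤ m, ((ad ℚ S[X] Z ^ (j + 1)) Y).coeff b ∈ U from this m le_rfl
  induction j with
  | zero => simpa using coeff_lie_mem hU hZ0 hZ hY
  | succ j ih =>
    rw [pow_succ', Module.End.mul_apply, LieAlgebra.ad_apply]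
    exact coeff_lie_mem hU hZ0 hZ fun b hb => ih b hb.le

theorem coeff_mem_of_derivative_add_sum_ad_mem {Z : S[X]} (c : ℕ → ℚ) {K : ℕ}
    (hZ0 : Z.coeff 0 = 0) (h : ∀ m, (derivative Z +
      ∑ j ∈ range K, c j • (ad ℚ S[X] (-Z) ^ (j + 1)) (derivative Z)).coeff m ∈ U) :
    ∀ m, Z.coeff m ∈ U := by
  suffices ∀ m, ∀ a ≤ m, Z.coeff a ∈ U from fun m => this m m le_rfl
  intro m
  induction m with
  | zero =>
    intro a ha
    rw [Nat.le_zero.1 ha, hZ0]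
    exact zero_mem _
  | succ m ih =>
    intro a ha
    rcases Nat.lt_or_eq_of_le ha with ha | rfl
    · exact ih a (by omega)
    have hZ' : ∀ b, (derivative Z).coeff b = ((b + 1 : ℕ) : ℚ) • Z.coeff (b + 1) := fun b => by
      rw [coeff_derivative, ← Nat.cast_succ, ← nsmul_eq_mul', Nat.cast_smul_eq_nsmul]
    have hY : ∀ b < m, (derivative Z).coeff b ∈ U := fun b hb => by
      rw [hZ']
      exact U.smul_mem _ (ih _ (by omega))
    have hnZ : ∀ a ≤ m, (-Z).coeff a ∈ U := fun a ha => by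
      rw [coeff_neg]
      exact neg_mem (ih a ha)
    have hsum := h m
    rw [coeff_add, finsetSum_coeff] at hsum
    have hYm : (derivative Z).coeff m ∈ U := by
      refine (Submodule.add_mem_iff_left _ (Submodule.sum_mem _ fun j _ => ?_)).1 hsum
      rw [coeff_smul]
      exact U.smul_mem _ (coeff_ad_pow_succ_mem hU (by rw [coeff_neg, hZ0, neg_zero]) hnZ hY j)
    rw [hZ'] at hYm
    simpa [Nat.cast_add_one_ne_zero] using U.smul_mem ((m + 1 : ℚ)⁻¹) hYm

theorem exists_coeff_mem_exp_eq_exp_C_mul_X_mul_exp {d : ℕ} (hd : U ^ d = ⊥) {x y : S}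
    (hx : x ∈ U) (hy : y ∈ U) : ∃ Z : S[X], IsNilpotent Z ∧ (∀ m, Z.coeff m ∈ U) ∧
      exp Z = exp (C x * X) * exp (C y * X) := by
  have hx' : IsNilpotent x := ⟨d, pow_eq_zero_of_mem_of_pow_eq_bot hd hx⟩
  have hy' : IsNilpotent y := ⟨d, pow_eq_zero_of_mem_of_pow_eq_bot hd hy⟩
  set g := exp (C x * X) * exp (C y * X)
  have hg1 := isNilpotent_exp_C_mul_X_mul_exp_sub_one hd hx hy
  set Z := logOneAdd (g - 1)
  have hZ : IsNilpotent Z := isNilpotent_logOneAdd hg1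
  have hexpZ : exp Z = g := by rw [exp_logOneAdd hg1, add_sub_cancel]
  have hZ0 : Z.coeff 0 = 0 := by
    rw [← constantCoeff_apply, map_logOneAdd _ hg1, map_sub,
      constantCoeff_exp_C_mul_X_mul_exp hx' hy', map_one, sub_self]
    simp [logOneAdd_eq_sum (pow_one (0 : S))]
  obtain ⟨K, hK⟩ := LieAlgebra.ad_nilpotent_of_nilpotent (R := ℚ) hZ.neg
  have hdexp := exp_neg_mul_derivative_exp hZ (pow_eq_zero_of_le K.le_succ hK)
  rw [hexpZ, derivative_exp_C_mul_X_mul_exp hx' hy'] at hdexp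
  change exp (-Z) * (g * _) = _ at hdexp
  rw [← mul_assoc, ← hexpZ, IsNilpotent.exp_neg_mul_exp_self hZ, one_mul,
    Finset.sum_range_succ'] at hdexp
  simp only [zero_add, Nat.factorial_one, Nat.cast_one, inv_one, pow_zero, Module.End.one_apply,
    one_smul] at hdexp
  refine ⟨Z, hZ, coeff_mem_of_derivative_add_sum_ad_mem hU (K := K)
    (fun j => ((j + 1 + 1).factorial : ℚ)⁻¹) hZ0 fun m => ?_, hexpZ⟩
  rw [add_comm, ← hdexp, coeff_add, coeff_C]
  refine add_mem (coeff_exp_C_neg_mul_X_mul_C_mul_exp_mem hU hx hy hy' m) ?_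
  split_ifs
  · exact hy
  · exact zero_mem _

theorem exists_exp_mul_exp_eq_exp (hnil : IsNilpotent U) {x y : S} (hx : x ∈ U) (hy : y ∈ U) :
    ∃ z ∈ U, exp x * exp y = exp z := by
  obtain ⟨d, hd⟩ := hnil
  obtain ⟨Z, hZ, hcoeff, hexpZ⟩ := exists_coeff_mem_exp_eq_exp_C_mul_X_mul_exp hU hd hx hy
  refine ⟨evalOne S Z, ?_, ?_⟩
  · rw [evalOne_apply, eval_eq_sum_range]
    exact Submodule.sum_mem _ fun i _ => by rw [one_pow, mul_one]; exact hcoeff i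
  · have hev := congrArg (evalOne S) hexpZ
    rw [IsNilpotent.map_exp hZ, map_mul,
      IsNilpotent.map_exp (isNilpotent_C_mul_X ⟨d, pow_eq_zero_of_mem_of_pow_eq_bot hd hx⟩),
      IsNilpotent.map_exp (isNilpotent_C_mul_X ⟨d, pow_eq_zero_of_mem_of_pow_eq_bot hd hy⟩)] at hev
    simpa using hev.symm

end BakerCampbellHausdorff

theorem LieSubalgebra.isNilpotent_toSubmodule_of_forall_isNilpotent {K M : Type*} [Field K]
    [AddCommGroup M] [Module K M] [FiniteDimensional K M] (L : LieSubalgebra K (Module.End K M))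
    (h : ∀ f ∈ L, IsNilpotent f) : IsNilpotent L.toSubmodule := by
  have : LieModule.IsNilpotent L M := (LieModule.isNilpotent_iff_forall' (R := K)).2 fun f => by
    rw [LieSubalgebra.toEnd_eq, LieModule.toEnd_module_end]
    exact h f f.2
  obtain ⟨k, hk⟩ := (LieModule.isNilpotent_iff K L M).1 this
  have hmem : ∀ j, ∀ f ∈ L.toSubmodule ^ j, ∀ v, f v ∈ LieModule.lowerCentralSeries K L M j := by
    intro j f hf
    induction hf using Submodule.pow_induction_on_left' with
    | algebraMap r => intro v; simp
    | add f g j _ _ hf hg => intro v; exact add_mem (hf v) (hg v)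
    | mem_mul f hf j g _ hg =>
      intro v
      rw [LieModule.lowerCentralSeries_succ, Module.End.mul_apply]
      exact LieSubmodule.lie_mem_lie (LieSubmodule.mem_top (⟨f, hf⟩ : L)) (hg v)
  refine ⟨k, (Submodule.eq_bot_iff _).2 fun f hf => LinearMap.ext fun v => ?_⟩
  simpa [hk] using hmem k f hf v

theorem LieSubalgebra.isNilpotent_toSubmodule_of_forall_isNilpotent_matrix {K ι : Type*}
    [Field K] [Fintype ι] [DecidableEq ι] (𝔲 : LieSubalgebra K (Matrix ι ι K))
    (h : ∀ X ∈ 𝔲, IsNilpotent X) : IsNilpotent 𝔲.toSubmodule := by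
  let e : Matrix ι ι K ≃ₐ[K] Module.End K (ι → K) := Matrix.toLinAlgEquiv'
  obtain ⟨k, hk⟩ := (𝔲.map e.toLieEquiv.toLieHom).isNilpotent_toSubmodule_of_forall_isNilpotent
    (by rintro _ ⟨X, hX, rfl⟩; exact (h X hX).map e)
  refine ⟨k, Submodule.map_injective_of_injective e.injective ?_⟩
  rw [Submodule.zero_eq_bot, Submodule.map_bot, ← Submodule.zero_eq_bot, ← hk]
  exact Submodule.map_pow 𝔲.toSubmodule e.toAlgHom k

theorem NormedSpace.exp_eq_isNilpotent_exp {𝔸 : Type*} [Ring 𝔸] [Algebra ℚ 𝔸]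
    [TopologicalSpace 𝔸] [IsTopologicalRing 𝔸] {a : 𝔸} (ha : IsNilpotent a) :
    NormedSpace.exp a = IsNilpotent.exp a := by
  obtain ⟨k, hk⟩ := ha
  rw [NormedSpace.exp_eq_tsum_rat, exp_eq_sum hk]
  exact tsum_eq_sum fun i hi => by rw [pow_eq_zero_of_le (by simpa using hi) hk, smul_zero]

theorem Matrix.exists_exp_mul_exp_eq_exp {K ι : Type*} [Field K] [CharZero K]
    [TopologicalSpace K] [IsTopologicalRing K] [Fintype ι] [DecidableEq ι]
    (𝔲 : LieSubalgebra K (Matrix ι ι K)) (h𝔲 : ∀ X ∈ 𝔲, IsNilpotent X) {X Y : Matrix ι ι K}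
    (hX : X ∈ 𝔲) (hY : Y ∈ 𝔲) :
    ∃ Z ∈ 𝔲, NormedSpace.exp X * NormedSpace.exp Y = NormedSpace.exp Z := by
  obtain ⟨k, hk⟩ := 𝔲.isNilpotent_toSubmodule_of_forall_isNilpotent_matrix h𝔲
  have hU : IsNilpotent (𝔲.toSubmodule.restrictScalars ℚ) :=
    ⟨k + 1, by rw [← Submodule.restrictScalars_pow k.succ_ne_zero, pow_succ, hk, zero_mul]; rfl⟩
  obtain ⟨Z, hZ, h⟩ :=
    _root_.exists_exp_mul_exp_eq_exp (fun a ha b hb => 𝔲.lie_mem ha hb) hU hX hY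
  refine ⟨Z, hZ, ?_⟩
  rwa [NormedSpace.exp_eq_isNilpotent_exp (h𝔲 X hX), NormedSpace.exp_eq_isNilpotent_exp (h𝔲 Y hY),
    NormedSpace.exp_eq_isNilpotent_exp (h𝔲 Z hZ)]

theorem Matrix.exists_eq_exp_of_mem_closure {K ι : Type*} [Field K] [CharZero K]
    [TopologicalSpace K] [IsTopologicalRing K] [Fintype ι] [DecidableEq ι]
    (𝔲 : LieSubalgebra K (Matrix ι ι K)) (h𝔲 : ∀ X ∈ 𝔲, IsNilpotent X) {u : GL ι K}
    (hu : u ∈ Subgroup.closure {u : GL ι K | ∃ X ∈ 𝔲, (u : Matrix ι ι K) = NormedSpace.exp X}) :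
    ∃ X ∈ 𝔲, (u : Matrix ι ι K) = NormedSpace.exp X := by
  induction hu using Subgroup.closure_induction with
  | mem u hu => exact hu
  | one => exact ⟨0, zero_mem 𝔲, NormedSpace.exp_zero.symm⟩
  | mul u v _ _ hu hv =>
    obtain ⟨X, hX, hu⟩ := hu
    obtain ⟨Y, hY, hv⟩ := hv
    obtain ⟨Z, hZ, hXY⟩ := Matrix.exists_exp_mul_exp_eq_exp 𝔲 h𝔲 hX hY
    exact ⟨Z, hZ, by rw [Units.val_mul, hu, hv, hXY]⟩
  | inv u _ hu =>
    obtain ⟨X, hX, hu⟩ := hu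
    refine ⟨-X, neg_mem hX, Units.inv_eq_of_mul_eq_one_right ?_⟩
    rw [hu, NormedSpace.exp_eq_isNilpotent_exp (h𝔲 X hX),
      NormedSpace.exp_eq_isNilpotent_exp (h𝔲 X hX).neg, IsNilpotent.exp_mul_exp_neg_self (h𝔲 X hX)]

/-- If `N` is the connected Lie subgroup of `GL(n,ℝ)` whose Lie algebra `𝔲` consists
of nilpotent matrices (so `N` is generated by the exponentials of elements of `𝔲`),
then every element of `N` is unipotent and the exponential map `𝔲 → N` is
surjective. -/
theorem unipotent_group_of_nilpotent_algebra {n : ℕ}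
    (𝔲 : LieSubalgebra ℝ (Matrix (Fin n) (Fin n) ℝ))
    (hnil : ∀ X ∈ 𝔲, X ^ n = 0) :
    let N : Subgroup (GL (Fin n) ℝ) :=
      Subgroup.closure {u : GL (Fin n) ℝ | ∃ X ∈ 𝔲,
        (u : Matrix (Fin n) (Fin n) ℝ) = NormedSpace.exp X}
    (∀ u ∈ N, ((u : Matrix (Fin n) (Fin n) ℝ) - 1) ^ n = 0) ∧
      ∀ u ∈ N, ∃ X ∈ 𝔲, (u : Matrix (Fin n) (Fin n) ℝ) = NormedSpace.exp X := by
  intro N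
  have h𝔲 : ∀ X ∈ 𝔲, IsNilpotent X := fun X hX => ⟨n, hnil X hX⟩
  have hN : ∀ u ∈ N, ∃ X ∈ 𝔲, (u : Matrix (Fin n) (Fin n) ℝ) = NormedSpace.exp X :=
    fun u hu => Matrix.exists_eq_exp_of_mem_closure 𝔲 h𝔲 hu
  refine ⟨fun u hu => ?_, hN⟩
  obtain ⟨X, hX, hu⟩ := hN u hu
  rw [hu, NormedSpace.exp_eq_isNilpotent_exp (h𝔲 X hX)]
  exact exp_sub_one_pow_eq_zero (hnil X hX)
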